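/- Under the stated assumptions, and assuming in addition that both block components W^{+−} : H₋⁻ → H₊⁺ and W^{−+} : H₋⁺ → H₊⁻ are compact, the operator Q := (id_X − ϱ₋⁻¹ π₋⁺ ϱ₋) ∘ P₋⁻¹ : Y → X satisfies: (i) P ∘ Q = id_Y on Y, and (ii) the composition ϱ ∘ Q : Y → H₋⁺ ⊕ H₊⁻ is a compact operator. -/

import Mathlib

/-- A bounded linear operator between Banach spaces is *Fredholm* if its kernel is
finite-dimensional and its range is closed and of finite codimension. -/
def IsFredholm {E F : Type*} [NormedAddCommGroup E] [NormedSpace ℂ E]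
    [NormedAddCommGroup F] [NormedSpace ℂ F] (T : E →L[ℂ] F) : Prop :=
  FiniteDimensional ℂ (LinearMap.ker T.toLinearMap) ∧ IsClosed (LinearMap.range T.toLinearMap : Set F) ∧
    FiniteDimensional ℂ (F ⧸ LinearMap.range T.toLinearMap)

/-- The index of a (Fredholm) operator: `dim ker T - codim ran T`. -/
noncomputable def fredholmIndex {E F : Type*} [NormedAddCommGroup E] [NormedSpace ℂ E]
    [NormedAddCommGroup F] [NormedSpace ℂ F] (T : E →L[ℂ] F) : ℤ :=
  (Module.finrank ℂ (LinearMap.ker T.toLinearMap) : ℤ) - (Module.finrank ℂ (F ⧸ LinearMap.range T.toLinearMap) : ℤ)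

/-- Two bounded operators *have equal index* if either both are Fredholm with the same
index, or neither is Fredholm. -/
def EqualIndex {E F E' F' : Type*} [NormedAddCommGroup E] [NormedSpace ℂ E]
    [NormedAddCommGroup F] [NormedSpace ℂ F] [NormedAddCommGroup E'] [NormedSpace ℂ E']
    [NormedAddCommGroup F'] [NormedSpace ℂ F'] (T : E →L[ℂ] F) (S : E' →L[ℂ] F') : Prop :=
  (IsFredholm T ∧ IsFredholm S ∧ fredholmIndex T = fredholmIndex S) ∨
    (¬ IsFredholm T ∧ ¬ IsFredholm S)

/-- The block component `π ∘ W |_q : q → ran π` of a bounded operator `W : H₋ → H₊`. -/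
noncomputable def blockComponent {Hm Hp : Type*}
    [NormedAddCommGroup Hm] [NormedSpace ℂ Hm] [NormedAddCommGroup Hp] [NormedSpace ℂ Hp]
    (π : Hp →L[ℂ] Hp) (W : Hm →L[ℂ] Hp) (q : Submodule ℂ Hm) :
    q →L[ℂ] LinearMap.range π.toLinearMap :=
  ContinuousLinearMap.codRestrict ((π.comp W).comp (Submodule.subtypeL q))
    (LinearMap.range π.toLinearMap) (fun x => LinearMap.mem_range_self π.toLinearMap (W x))

/-- The operator `W := ϱ₊ ∘ ϱ₋⁻¹ : H₋ → H₊`, where `ϱ₋⁻¹ : H₋ → ker P ⊆ X` is the inverse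
of the isomorphism `rm = ϱ₋|_{ker P} : ker P ≃ H₋`. -/
noncomputable def Wop {X Y Hp Hm : Type*}
    [NormedAddCommGroup X] [NormedSpace ℂ X] [NormedAddCommGroup Y] [NormedSpace ℂ Y]
    [NormedAddCommGroup Hp] [NormedSpace ℂ Hp] [NormedAddCommGroup Hm] [NormedSpace ℂ Hm]
    (P : X →L[ℂ] Y) (ϱp : X →L[ℂ] Hp) (rm : (LinearMap.ker P.toLinearMap) ≃L[ℂ] Hm) :
    Hm →L[ℂ] Hp :=
  (ϱp.comp (Submodule.subtypeL (LinearMap.ker P.toLinearMap))).comp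
    (rm.symm : Hm →L[ℂ] LinearMap.ker P.toLinearMap)

/-- The operator `ϱ := (π₋⁺ϱ₋) ⊕ (π₊⁻ϱ₊) : X → H₋⁺ ⊕ H₊⁻`. -/
noncomputable def rhoOp {X Hp Hm : Type*}
    [NormedAddCommGroup X] [NormedSpace ℂ X]
    [NormedAddCommGroup Hp] [NormedSpace ℂ Hp] [NormedAddCommGroup Hm] [NormedSpace ℂ Hm]
    (ϱm : X →L[ℂ] Hm) (ϱp : X →L[ℂ] Hp) (πmp : Hm →L[ℂ] Hm) (πpm : Hp →L[ℂ] Hp) :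
    X →L[ℂ] (LinearMap.range πmp.toLinearMap × LinearMap.range πpm.toLinearMap) :=
  (ContinuousLinearMap.codRestrict (πmp.comp ϱm) (LinearMap.range πmp.toLinearMap)
      (fun x => LinearMap.mem_range_self πmp.toLinearMap (ϱm x))).prod
    (ContinuousLinearMap.codRestrict (πpm.comp ϱp) (LinearMap.range πpm.toLinearMap)
      (fun x => LinearMap.mem_range_self πpm.toLinearMap (ϱp x)))


/-- The operator `P₋⁻¹ := (ϱ₊ ⊕ P)⁻¹ ∘ (0 ⊕ id_Y) : Y → X`, where `ep` witnesses the
bounded invertibility of `ϱ₊ ⊕ P : X → H₊ ⊕ Y`. -/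
noncomputable def Pminus {X Y Hp : Type*}
    [NormedAddCommGroup X] [NormedSpace ℂ X] [NormedAddCommGroup Y] [NormedSpace ℂ Y]
    [NormedAddCommGroup Hp] [NormedSpace ℂ Hp]
    (ep : X ≃L[ℂ] Hp × Y) : Y →L[ℂ] X :=
  (ep.symm : Hp × Y →L[ℂ] X).comp ((0 : Y →L[ℂ] Hp).prod (ContinuousLinearMap.id ℂ Y))

/-- The operator `ϱ₋⁻¹ : H₋ → ker P ⊆ X`, viewed as a map into `X`. -/
noncomputable def rhoMinusInv {X Y Hm : Type*}
    [NormedAddCommGroup X] [NormedSpace ℂ X] [NormedAddCommGroup Y] [NormedSpace ℂ Y]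
    [NormedAddCommGroup Hm] [NormedSpace ℂ Hm]
    (P : X →L[ℂ] Y) (rm : (LinearMap.ker P.toLinearMap) ≃L[ℂ] Hm) : Hm →L[ℂ] X :=
  (Submodule.subtypeL (LinearMap.ker P.toLinearMap)).comp (rm.symm : Hm →L[ℂ] LinearMap.ker P.toLinearMap)

/-- The operator `Q := (id_X − ϱ₋⁻¹ π₋⁺ ϱ₋) ∘ P₋⁻¹ : Y → X`. -/
noncomputable def Qop {X Y Hp Hm : Type*}
    [NormedAddCommGroup X] [NormedSpace ℂ X] [NormedAddCommGroup Y] [NormedSpace ℂ Y]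
    [NormedAddCommGroup Hp] [NormedSpace ℂ Hp] [NormedAddCommGroup Hm] [NormedSpace ℂ Hm]
    (P : X →L[ℂ] Y) (ϱm : X →L[ℂ] Hm) (πmp : Hm →L[ℂ] Hm)
    (rm : (LinearMap.ker P.toLinearMap) ≃L[ℂ] Hm) (ep : X ≃L[ℂ] Hp × Y) : Y →L[ℂ] X :=
  (ContinuousLinearMap.id ℂ X - (rhoMinusInv P rm).comp (πmp.comp ϱm)).comp (Pminus ep)

/-!
For `u = P₋⁻¹ f` we have `ϱ₊ u = 0` and `P u = f`, while `ϱ₋⁻¹` takes values in `ker P` and is a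
right inverse of `ϱ₋`. Hence `P Q f = f`, `ϱ₋ Q f = (1 - π₋⁺) ϱ₋ u` and `ϱ₊ Q f = -W π₋⁺ ϱ₋ u`.
Since `π₋⁺` is idempotent, the first component of `ϱ Q` vanishes and the second one is
`-W⁻⁺ (π₋⁺ ϱ₋ P₋⁻¹ f)`, so `ϱ ∘ Q` factors through the compact operator `W⁻⁺`.
-/

noncomputable def compRangeRestrict {E F : Type*} [NormedAddCommGroup E] [NormedSpace ℂ E]
    [NormedAddCommGroup F] [NormedSpace ℂ F] (π : F →L[ℂ] F) (T : E →L[ℂ] F) :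
    E →L[ℂ] LinearMap.range π.toLinearMap :=
  ContinuousLinearMap.codRestrict (π.comp T) (LinearMap.range π.toLinearMap)
    (fun x => LinearMap.mem_range_self π.toLinearMap (T x))

section

variable {X Y Hp Hm : Type*}
  [NormedAddCommGroup X] [NormedSpace ℂ X] [NormedAddCommGroup Y] [NormedSpace ℂ Y]
  [NormedAddCommGroup Hp] [NormedSpace ℂ Hp] [NormedAddCommGroup Hm] [NormedSpace ℂ Hm]

section Pminus

variable {P : X →L[ℂ] Y} {ϱp : X →L[ℂ] Hp} {ep : X ≃L[ℂ] Hp × Y}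

theorem apply_Pminus (ep : X ≃L[ℂ] Hp × Y) (f : Y) : ep (Pminus ep f) = (0, f) := by
  simp [Pminus]

theorem rhoPlus_Pminus_apply (hep : ∀ u : X, ep u = (ϱp u, P u)) (f : Y) :
    ϱp (Pminus ep f) = 0 :=
  congrArg Prod.fst ((hep _).symm.trans (apply_Pminus ep f))

theorem P_Pminus_apply (hep : ∀ u : X, ep u = (ϱp u, P u)) (f : Y) :
    P (Pminus ep f) = f :=
  congrArg Prod.snd ((hep _).symm.trans (apply_Pminus ep f))

end Pminus

section rhoMinusInv

variable {P : X →L[ℂ] Y} {ϱm : X →L[ℂ] Hm} {rm : (LinearMap.ker P.toLinearMap) ≃L[ℂ] Hm}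

theorem P_rhoMinusInv_apply (rm : (LinearMap.ker P.toLinearMap) ≃L[ℂ] Hm) (h : Hm) :
    P (rhoMinusInv P rm h) = 0 :=
  (rm.symm h).2

theorem rhoMinus_rhoMinusInv_apply (hrm : ∀ u : LinearMap.ker P.toLinearMap, rm u = ϱm u)
    (h : Hm) : ϱm (rhoMinusInv P rm h) = h := by
  rw [rhoMinusInv, ContinuousLinearMap.comp_apply, Submodule.subtypeL_apply, ← hrm]
  exact rm.apply_symm_apply h

theorem Wop_apply (ϱp : X →L[ℂ] Hp) (h : Hm) : Wop P ϱp rm h = ϱp (rhoMinusInv P rm h) :=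
  rfl

end rhoMinusInv

section Qop

variable {P : X →L[ℂ] Y} {ϱp : X →L[ℂ] Hp} {ϱm : X →L[ℂ] Hm} {πmp : Hm →L[ℂ] Hm}
  {ep : X ≃L[ℂ] Hp × Y} {rm : (LinearMap.ker P.toLinearMap) ≃L[ℂ] Hm}

theorem P_Qop_apply (hep : ∀ u : X, ep u = (ϱp u, P u)) (f : Y) :
    P (Qop P ϱm πmp rm ep f) = f := by
  simp [Qop, P_rhoMinusInv_apply, P_Pminus_apply hep]

theorem rhoMinus_Qop_apply (hrm : ∀ u : LinearMap.ker P.toLinearMap, rm u = ϱm u) (f : Y) :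
    ϱm (Qop P ϱm πmp rm ep f) = ϱm (Pminus ep f) - πmp (ϱm (Pminus ep f)) := by
  simp [Qop, rhoMinus_rhoMinusInv_apply hrm]

theorem rhoPlus_Qop_apply (hep : ∀ u : X, ep u = (ϱp u, P u)) (f : Y) :
    ϱp (Qop P ϱm πmp rm ep f) = -Wop P ϱp rm (πmp (ϱm (Pminus ep f))) := by
  simp [Qop, Wop_apply, rhoPlus_Pminus_apply hep]

theorem rhoOp_Qop_apply (πpm : Hp →L[ℂ] Hp) (hπmp : πmp.comp πmp = πmp)
    (hep : ∀ u : X, ep u = (ϱp u, P u)) (hrm : ∀ u : LinearMap.ker P.toLinearMap, rm u = ϱm u)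
    (f : Y) :
    rhoOp ϱm ϱp πmp πpm (Qop P ϱm πmp rm ep f) =
      (0, -blockComponent πpm (Wop P ϱp rm) (LinearMap.range πmp.toLinearMap)
        (compRangeRestrict πmp (ϱm.comp (Pminus ep)) f)) := by
  refine Prod.ext (Subtype.ext ?_) (Subtype.ext ?_)
  · change πmp (ϱm (Qop P ϱm πmp rm ep f)) = 0
    rw [rhoMinus_Qop_apply hrm, map_sub, ← ContinuousLinearMap.comp_apply πmp πmp, hπmp, sub_self]
  · change πpm (ϱp (Qop P ϱm πmp rm ep f)) = -πpm (Wop P ϱp rm (πmp (ϱm (Pminus ep f))))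
    rw [rhoPlus_Qop_apply hep, map_neg]

end Qop

end

theorem statement6_general
    {X Y Hp Hm : Type*}
    [NormedAddCommGroup X] [InnerProductSpace ℂ X]
    [NormedAddCommGroup Y] [NormedSpace ℂ Y]
    [NormedAddCommGroup Hp] [NormedSpace ℂ Hp]
    [NormedAddCommGroup Hm] [NormedSpace ℂ Hm]
    (πpm : Hp →L[ℂ] Hp) (πmp : Hm →L[ℂ] Hm)
    (hπmp : πmp.comp πmp = πmp)
    (P : X →L[ℂ] Y) (ϱp : X →L[ℂ] Hp) (ϱm : X →L[ℂ] Hm)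
    (ep : X ≃L[ℂ] Hp × Y) (hep : ∀ u : X, ep u = (ϱp u, P u))
    (rm : (LinearMap.ker P.toLinearMap) ≃L[ℂ] Hm)
    (hrm : ∀ u : LinearMap.ker P.toLinearMap, rm u = ϱm u)
    (hcompactMP :
      IsCompactOperator ⇑(blockComponent πpm (Wop P ϱp rm) (LinearMap.range πmp.toLinearMap))) :
    P.comp (Qop P ϱm πmp rm ep) = ContinuousLinearMap.id ℂ Y ∧
    IsCompactOperator ⇑((rhoOp ϱm ϱp πmp πpm).comp (Qop P ϱm πmp rm ep)) := by
  refine ⟨ContinuousLinearMap.ext (P_Qop_apply hep), ?_⟩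
  have hfactor : ⇑((rhoOp ϱm ϱp πmp πpm).comp (Qop P ϱm πmp rm ep)) =
      ContinuousLinearMap.inr ℂ _ _ ∘
        (-(blockComponent πpm (Wop P ϱp rm) (LinearMap.range πmp.toLinearMap) ∘
          compRangeRestrict πmp (ϱm.comp (Pminus ep)))) :=
    funext (rhoOp_Qop_apply πpm hπmp hep hrm)
  rw [hfactor]
  exact ((hcompactMP.comp_clm _).neg).clm_comp _

/-- If both block components `W⁺⁻ : H₋⁻ → H₊⁺` and `W⁻⁺ : H₋⁺ → H₊⁻` are compact, then
`Q := (id_X − ϱ₋⁻¹ π₋⁺ ϱ₋) ∘ P₋⁻¹` satisfies `P ∘ Q = id_Y` and `ϱ ∘ Q : Y → H₋⁺ ⊕ H₊⁻`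
is a compact operator. -/
theorem statement6
    {X Y Hp Hm : Type*}
    [NormedAddCommGroup X] [InnerProductSpace ℂ X] [CompleteSpace X]
    [NormedAddCommGroup Y] [NormedSpace ℂ Y] [CompleteSpace Y]
    [NormedAddCommGroup Hp] [NormedSpace ℂ Hp] [CompleteSpace Hp]
    [NormedAddCommGroup Hm] [NormedSpace ℂ Hm] [CompleteSpace Hm]
    (πpp πpm : Hp →L[ℂ] Hp) (πmp πmm : Hm →L[ℂ] Hm)
    (hπpp : πpp.comp πpp = πpp) (hπpm : πpm.comp πpm = πpm)
    (hπp : πpp + πpm = ContinuousLinearMap.id ℂ Hp)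
    (hπmp : πmp.comp πmp = πmp) (hπmm : πmm.comp πmm = πmm)
    (hπm : πmp + πmm = ContinuousLinearMap.id ℂ Hm)
    (P : X →L[ℂ] Y) (ϱp : X →L[ℂ] Hp) (ϱm : X →L[ℂ] Hm)
    (ep : X ≃L[ℂ] Hp × Y) (hep : ∀ u : X, ep u = (ϱp u, P u))
    (em : X ≃L[ℂ] Hm × Y) (hem : ∀ u : X, em u = (ϱm u, P u))
    (rm : (LinearMap.ker P.toLinearMap) ≃L[ℂ] Hm)
    (hrm : ∀ u : LinearMap.ker P.toLinearMap, rm u = ϱm u)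
    (hcompactPM :
      IsCompactOperator ⇑(blockComponent πpp (Wop P ϱp rm) (LinearMap.range πmm.toLinearMap)))
    (hcompactMP :
      IsCompactOperator ⇑(blockComponent πpm (Wop P ϱp rm) (LinearMap.range πmp.toLinearMap))) :
    P.comp (Qop P ϱm πmp rm ep) = ContinuousLinearMap.id ℂ Y ∧
    IsCompactOperator ⇑((rhoOp ϱm ϱp πmp πpm).comp (Qop P ϱm πmp rm ep)) :=
  statement6_general πpm πmp hπmp P ϱp ϱm ep hep rm hrm hcompactMP
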